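/- arXiv:2302.01138 — 3 statements merged into one kernel-verified Lean document; each statement's English description precedes it below -/
import Mathlib

section
/- For integers L ≥ 2, the generating series Z(L) := ∑_{k≥0} (12√3)^{-k} · #T¹(L,k), where #T¹(L,k) = 4^{k-1} (2L+3k-5)!!/(k!(2L+k-1)!!) · L·C(2L,L), is equal to 6^L (2L-5)!!/(8√3 · L!). -/
/-!
Let `C(z) = 1 + z + ⋯` be the power series with `C² = 1 + z C³`. The coefficient of `z^k` in
`C^x` is an explicit polynomial `c_k(x)`, and the summand of `Z(L)` is the combination
`(3 c_k(a) - a/(a+2) c_k(a+2)) / (2a(a+3))`, times `ρ^k` and a constant, with `a = 2L - 3` and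
`ρ = 2/(3√3)`, the singular point of `C`. The series `Q(x) = ∑ c_k(x) ρ^k` converge by a
Raabe-type estimate, since `c_{k+2}(x) ρ² / c_k(x) ≈ 1 - 3/k`, and `Q(x+1) = Q(1) Q(x)`
because `C^(x+1) = C · C^x`. Then `Q(1)` solves `S² = 1 + ρ S³` with `S ≥ 1`, whose only such
root is the double root `√3`, so `Q(m) = √3^m` and the sum is read off.
-/

open scoped Nat

open Finset Polynomial

section DoubleRising

variable {R : Type*} [CommSemiring R]

def doubleRising (c : R) (n : ℕ) : R := ∏ l ∈ range n, (c + 2 * l)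

@[simp]
lemma doubleRising_zero (c : R) : doubleRising c 0 = 1 := prod_range_zero _

lemma doubleRising_succ (c : R) (n : ℕ) :
    doubleRising c (n + 1) = doubleRising c n * (c + 2 * n) :=
  prod_range_succ _ _

lemma doubleRising_succ' (c : R) (n : ℕ) :
    doubleRising c (n + 1) = c * doubleRising (c + 2) n := by
  simp only [doubleRising, prod_range_succ', Nat.cast_add, Nat.cast_one, Nat.cast_zero, mul_zero,
    add_zero]
  rw [mul_comm]
  congr 1
  exact prod_congr rfl fun l _ => by ring

lemma map_doubleRising {S : Type*} [CommSemiring S] (f : R →+* S) (c : R) (n : ℕ) :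
    f (doubleRising c n) = doubleRising (f c) n := by
  simp [doubleRising, map_prod, map_ofNat]

lemma doubleRising_pos [PartialOrder R] [IsStrictOrderedRing R] {c : R} (hc : 0 < c) (n : ℕ) :
    0 < doubleRising c n :=
  prod_pos fun _ _ => by positivity

end DoubleRising

lemma Nat.doubleFactorial_add_two_mul (a n : ℕ) :
    (a + 2 * n)‼ = a‼ * doubleRising (a + 2) n := by
  induction n with
  | zero => simp
  | succ n ih =>
    rw [show a + 2 * (n + 1) = a + 2 * n + 2 by ring, Nat.doubleFactorial_add_two, ih,
      doubleRising_succ]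
    push_cast
    ring

lemma Nat.choose_mul_factorial_eq_doubleFactorial (n : ℕ) :
    (2 * (n + 1)).choose (n + 1) * (n + 1)! = 2 ^ (n + 1) * (2 * n + 1)‼ := by
  have hfac : (2 * (n + 1))! = 2 ^ (n + 1) * (n + 1)! * (2 * n + 1)‼ := by
    rw [show 2 * (n + 1) = (2 * n + 1) + 1 by ring, Nat.factorial_eq_mul_doubleFactorial,
      show 2 * n + 1 + 1 = 2 * (n + 1) by ring, Nat.doubleFactorial_two_mul]
  have hchoose := Nat.choose_mul_factorial_mul_factorial (show n + 1 ≤ 2 * (n + 1) by omega)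
  rw [show 2 * (n + 1) - (n + 1) = n + 1 by omega, hfac] at hchoose
  exact Nat.eq_of_mul_eq_mul_right (Nat.factorial_pos _) (by linarith)

lemma Polynomial.eq_C_eval_zero_of_periodic {K : Type*} [Field K] [CharZero K] {p : K[X]}
    {c : K} (hp : Function.Periodic (fun y => p.eval y) c) (hc : c ≠ 0) : p = C (p.eval 0) := by
  apply eq_of_infinite_eval_eq
  refine Set.infinite_of_injective_forall_mem (f := fun n : ℕ => (n : K) * c) ?_ ?_
  · intro m n hmn
    exact_mod_cast mul_right_cancel₀ hc hmn
  · intro n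
    simpa using hp.nat_mul_eq n

lemma summable_of_le_sub_succ {f g : ℕ → ℝ} (hf : ∀ n, 0 ≤ f n) (hg : ∀ n, 0 ≤ g n)
    {N : ℕ} (h : ∀ n ≥ N, f n ≤ g n - g (n + 1)) : Summable f := by
  rw [← summable_nat_add_iff N]
  refine summable_of_sum_range_le (c := g N) (fun n => hf _) fun n => ?_
  calc ∑ i ∈ range n, f (i + N)
      ≤ ∑ i ∈ range n, (g (i + N) - g (i + 1 + N)) :=
        sum_le_sum fun i _ => by simpa [add_right_comm] using h (i + N) (by omega)
    _ = g N - g (n + N) := by simpa using sum_range_sub' (fun i => g (i + N)) n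
    _ ≤ g N := sub_le_self _ (hg _)

-- A Raabe-type test with step two: the weights `n f n + (n + 1) f (n + 1)` telescope.
lemma summable_of_mul_add_two_le {f : ℕ → ℝ} (hf : ∀ n, 0 ≤ f n) {N : ℕ}
    (h : ∀ n ≥ N, (n + 2) * f (n + 2) ≤ (n - 1 / 2) * f n) : Summable f := by
  refine summable_of_le_sub_succ hf (g := fun n => 2 * (n * f n + (n + 1) * f (n + 1)))
    (N := N) (fun n => by have := hf n; have := hf (n + 1); positivity) fun n hn => ?_
  have := h n hn
  push_cast
  linarith

namespace Triangulation

-- Evaluated at `x`, `powCoeffPoly k` is the coefficient of `z^k` in `C(z)^x`.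
noncomputable def powCoeffPoly : ℕ → ℝ[X]
  | 0 => 1
  | k + 1 => C ((2 ^ (k + 1) * (k + 1)! : ℝ)⁻¹) * X * doubleRising (X + C ((k : ℝ) + 3)) k

noncomputable def powCoeff (x : ℝ) (k : ℕ) : ℝ := (powCoeffPoly k).eval x

@[simp]
lemma powCoeff_zero (x : ℝ) : powCoeff x 0 = 1 := by simp [powCoeff, powCoeffPoly]

lemma powCoeff_succ (x : ℝ) (k : ℕ) :
    powCoeff x (k + 1) = x * doubleRising (x + k + 3) k / (2 ^ (k + 1) * (k + 1)!) := by
  rw [powCoeff, powCoeffPoly, ← coe_evalRingHom, map_mul, map_mul, map_doubleRising]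
  simp only [coe_evalRingHom, eval_C, eval_X, eval_add]
  rw [add_assoc x]
  field_simp

lemma powCoeff_zero_left {k : ℕ} (hk : k ≠ 0) : powCoeff 0 k = 0 := by
  obtain ⟨j, rfl⟩ := Nat.exists_eq_succ_of_ne_zero hk
  simp [powCoeff_succ]

lemma powCoeff_pos {x : ℝ} (hx : 0 < x) (k : ℕ) : 0 < powCoeff x k := by
  cases k with
  | zero => simp
  | succ k =>
    rw [powCoeff_succ]
    have := doubleRising_pos (show 0 < x + k + 3 by positivity) k
    positivity

-- The coefficientwise form of `C^(x+2) = C^x + z C^(x+3)`.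
lemma powCoeff_add_two_succ (x : ℝ) (k : ℕ) :
    powCoeff (x + 2) (k + 1) = powCoeff x (k + 1) + powCoeff (x + 3) k := by
  cases k with
  | zero =>
    simp only [zero_add, powCoeff_succ, Nat.cast_zero, add_zero, doubleRising_zero, mul_one,
      pow_one, Nat.factorial_one, Nat.cast_one, powCoeff_zero]
    ring
  | succ k =>
    rw [powCoeff_succ, powCoeff_succ, powCoeff_succ]
    rw [show x + 2 + (k + 1 : ℕ) + 3 = x + k + 6 by push_cast; ring, doubleRising_succ,
      show x + (k + 1 : ℕ) + 3 = x + k + 4 by push_cast; ring, doubleRising_succ',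
      show x + 3 + k + 3 = x + k + 6 by ring, show x + k + 4 + 2 = x + k + 6 by ring,
      Nat.factorial_succ (k + 1)]
    push_cast
    field_simp
    ring

lemma powCoeff_add_two_mul (x : ℝ) (k : ℕ) :
    powCoeff x (k + 2) * ((x + k + 2) * (4 * (k + 1) * (k + 2))) =
      powCoeff x k * ((x + 3 * k) * (x + 3 * k + 2) * (x + 3 * k + 4)) := by
  cases k with
  | zero =>
    simp only [zero_add, powCoeff_succ, Nat.cast_one, doubleRising_succ, doubleRising_zero,
      Nat.cast_zero, mul_zero, add_zero, one_mul, Nat.reduceAdd, Nat.factorial_two,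
      Nat.cast_ofNat, mul_one, powCoeff_zero]
    ring
  | succ k =>
    have hprod : (x + k + 3) * doubleRising (x + k + 5) (k + 2) =
        doubleRising (x + k + 3) k * ((x + 3 * k + 3) * (x + 3 * k + 5) * (x + 3 * k + 7)) := by
      rw [show x + k + 5 = x + k + 3 + 2 by ring, ← doubleRising_succ', doubleRising_succ,
        doubleRising_succ, doubleRising_succ]
      push_cast
      ring
    rw [show k + 1 + 2 = (k + 2) + 1 by ring, powCoeff_succ, powCoeff_succ,
      show x + (k + 2 : ℕ) + 3 = x + k + 5 by push_cast; ring, Nat.factorial_succ (k + 2),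
      Nat.factorial_succ (k + 1)]
    push_cast
    field_simp
    linear_combination (x * 4 * (k + 3) * 2 ^ (k + 1)) * hprod

-- `C^(x+1) = C * C^x`: both sides are polynomials in `x`, and their difference is
-- `2`-periodic by `powCoeff_add_two_succ` and vanishes at `0`.
lemma powCoeff_add_one (x : ℝ) (k : ℕ) :
    powCoeff (x + 1) k = ∑ ij ∈ antidiagonal k, powCoeff 1 ij.1 * powCoeff x ij.2 := by
  induction k generalizing x with
  | zero => simp
  | succ k ih =>
    set p : ℝ[X] := ∑ ij ∈ antidiagonal (k + 1), C (powCoeff 1 ij.1) * powCoeffPoly ij.2 -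
      (powCoeffPoly (k + 1)).comp (X + 1) with hp
    have hp_eval (y : ℝ) : p.eval y = ∑ ij ∈ antidiagonal (k + 1),
        powCoeff 1 ij.1 * powCoeff y ij.2 - powCoeff (y + 1) (k + 1) := by
      simp [hp, eval_finsetSum, powCoeff]
    have hperiodic : Function.Periodic (fun y => p.eval y) 2 := by
      intro y
      simp only [hp_eval, Nat.sum_antidiagonal_succ', powCoeff_zero, mul_one]
      rw [show y + 2 + 1 = (y + 1) + 2 by ring, powCoeff_add_two_succ,
        show y + 1 + 3 = (y + 3) + 1 by ring, ih]
      simp only [powCoeff_add_two_succ, mul_add, sum_add_distrib]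
      ring
    have hzero : p.eval 0 = 0 := by
      rw [hp_eval, Nat.sum_antidiagonal_succ', sum_eq_zero fun ij _ => by
        rw [powCoeff_zero_left (Nat.succ_ne_zero _), mul_zero]]
      simp
    have := hp_eval x
    rw [Polynomial.eq_C_eval_zero_of_periodic hperiodic two_ne_zero, hzero, eval_C] at this
    linarith

noncomputable def rho : ℝ := 2 / (3 * √3)

lemma rho_pos : 0 < rho := by unfold rho; positivity

lemma rho_sq : rho ^ 2 = 4 / 27 := by
  rw [rho, div_pow, mul_pow, Real.sq_sqrt (by norm_num)]
  norm_num

lemma rho_mul_sqrt_three : rho * (3 * √3) = 2 := by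
  rw [rho, div_mul_cancel₀ _ (by positivity)]

lemma powCoeff_mul_rho_pow_add_two_le {x : ℝ} (hx : 0 < x) {k : ℕ}
    (hk : x ^ 2 + 3 * x + 10 ≤ k) :
    (k + 2) * (powCoeff x (k + 2) * rho ^ (k + 2)) ≤ (k - 1 / 2) * (powCoeff x k * rho ^ k) := by
  have hP := powCoeff_pos hx k
  have hD : 0 < (x + k + 2) * (4 * (k + 1) * (k + 2)) := by positivity
  have hk0 : (0 : ℝ) ≤ k := by positivity
  have hcubic : 2 * ((x + 3 * k) * (x + 3 * k + 2) * (x + 3 * k + 4)) ≤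
      27 * (2 * k - 1) * (k + 1) * (x + k + 2) := by
    nlinarith [sq_nonneg x, mul_nonneg hk0 hk0, mul_nonneg hx.le hk0,
      mul_le_mul_of_nonneg_left hk (by positivity : (0 : ℝ) ≤ 27 * k),
      mul_le_mul_of_nonneg_left hk (by positivity : (0 : ℝ) ≤ 9 * x ^ 2),
      mul_le_mul_of_nonneg_left hk (by positivity : (0 : ℝ) ≤ 36 * x),
      mul_le_mul_of_nonneg_left hk (by norm_num : (0 : ℝ) ≤ 249)]
  have hstep : (k + 2) * powCoeff x (k + 2) * 4 ≤ 27 * ((k - 1 / 2) * powCoeff x k) := by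
    refine le_of_mul_le_mul_right ?_ hD
    linear_combination (4 * (k + 2)) * powCoeff_add_two_mul x k +
      mul_le_mul_of_nonneg_left hcubic (by positivity : (0 : ℝ) ≤ 2 * (k + 2) * powCoeff x k)
  calc (k + 2) * (powCoeff x (k + 2) * rho ^ (k + 2))
      = rho ^ k * ((k + 2) * powCoeff x (k + 2) * 4) / 27 := by
        rw [pow_add, rho_sq]
        ring
    _ ≤ rho ^ k * (27 * ((k - 1 / 2) * powCoeff x k)) / 27 := by
        have := rho_pos
        gcongr
    _ = (k - 1 / 2) * (powCoeff x k * rho ^ k) := by ring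

lemma summable_powCoeff_mul_rho_pow {x : ℝ} (hx : 0 < x) :
    Summable fun k => powCoeff x k * rho ^ k :=
  summable_of_mul_add_two_le (fun k => (mul_pos (powCoeff_pos hx k) (pow_pos rho_pos k)).le)
    (N := ⌈x ^ 2 + 3 * x + 10⌉₊) fun _ hk =>
      powCoeff_mul_rho_pow_add_two_le hx (Nat.ceil_le.mp hk)

-- `C(rho)^x`, the value of the series at its singular point `rho`.
noncomputable def powAtRho (x : ℝ) : ℝ := ∑' k, powCoeff x k * rho ^ k

lemma powAtRho_add_one {x : ℝ} (hx : 0 < x) : powAtRho (x + 1) = powAtRho 1 * powAtRho x := by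
  have hnorm {y : ℝ} (hy : 0 < y) : Summable fun k => ‖powCoeff y k * rho ^ k‖ := by
    simpa [Real.norm_eq_abs] using (summable_powCoeff_mul_rho_pow hy).abs
  rw [powAtRho, powAtRho, powAtRho,
    tsum_mul_tsum_eq_tsum_sum_antidiagonal_of_summable_norm (hnorm one_pos) (hnorm hx)]
  refine tsum_congr fun k => ?_
  rw [powCoeff_add_one, sum_mul]
  refine sum_congr rfl fun ij hij => ?_
  rw [← mem_antidiagonal.mp hij, pow_add]
  ring

lemma one_le_powAtRho_one : 1 ≤ powAtRho 1 := by
  have h := (summable_powCoeff_mul_rho_pow one_pos).le_tsum 0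
    fun k _ => (mul_pos (powCoeff_pos one_pos k) (pow_pos rho_pos k)).le
  simpa [powAtRho] using h

lemma powAtRho_two : powAtRho 2 = 1 + rho * powAtRho 3 := by
  have hsucc (k : ℕ) : powCoeff 2 (k + 1) * rho ^ (k + 1) = rho * (powCoeff 3 k * rho ^ k) := by
    rw [show (2 : ℝ) = 0 + 2 by norm_num, powCoeff_add_two_succ,
      powCoeff_zero_left k.succ_ne_zero, zero_add, zero_add]
    ring
  rw [powAtRho, (summable_powCoeff_mul_rho_pow two_pos).tsum_eq_zero_add, tsum_congr hsucc,
    tsum_mul_left, powAtRho]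
  simp

-- `S = C(rho)` solves `S² = 1 + rho S³`, whose only root `≥ 1` is the double root `√3`.
lemma powAtRho_one : powAtRho 1 = √3 := by
  set S := powAtRho 1
  have h2 : powAtRho 2 = S ^ 2 := by
    rw [show (2 : ℝ) = 1 + 1 by norm_num, powAtRho_add_one one_pos]; ring
  have h3 : powAtRho 3 = S ^ 3 := by
    rw [show (3 : ℝ) = 2 + 1 by norm_num, powAtRho_add_one two_pos, h2]; ring
  have heq := powAtRho_two
  rw [h2, h3] at heq
  have hS := one_le_powAtRho_one
  have hsq : √3 ^ 2 = 3 := Real.sq_sqrt (by norm_num)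
  have hfactor : (S - √3) ^ 2 * (2 * S + √3) = 0 := by
    linear_combination (-3 * √3) * heq - S ^ 3 * rho_mul_sqrt_three + √3 * hsq
  have hpos : 0 < 2 * S + √3 := by positivity
  have := pow_eq_zero_iff two_ne_zero |>.mp ((mul_eq_zero.mp hfactor).resolve_right hpos.ne')
  linarith

lemma powAtRho_natCast {m : ℕ} (hm : 1 ≤ m) : powAtRho m = √3 ^ m := by
  induction m, hm using Nat.le_induction with
  | base => simpa using powAtRho_one
  | succ m hm ih =>
    rw [Nat.cast_succ, powAtRho_add_one (by exact_mod_cast hm), powAtRho_one, ih, pow_succ]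
    ring

lemma powCoeff_natCast_mul {a : ℕ} (ha : 1 ≤ a) (k : ℕ) :
    powCoeff a k * (2 ^ k * k ! * (a + k)‼) = a * (a + 3 * k - 2)‼ := by
  cases k with
  | zero =>
    obtain ⟨b, rfl⟩ := Nat.exists_eq_add_of_le' ha
    rw [show b + 1 + 3 * 0 - 2 = b - 1 by omega, add_zero, Nat.doubleFactorial_add_one]
    simp
  | succ j =>
    rw [show a + 3 * (j + 1) - 2 = (a + (j + 1)) + 2 * j by omega,
      Nat.doubleFactorial_add_two_mul, Nat.cast_mul, ← Nat.coe_castRingHom, map_doubleRising,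
      Nat.coe_castRingHom, powCoeff_succ]
    push_cast
    field_simp
    congr 1
    ring

lemma doubleFactorial_div_eq_powCoeff_sub {a : ℕ} (ha : 1 ≤ a) (k : ℕ) :
    ((a + 3 * k - 2)‼ : ℝ) / (2 ^ k * k ! * (a + k + 2)‼) =
      3 / (2 * a * (a + 3)) * powCoeff a k - 1 / (2 * (a + 2) * (a + 3)) * powCoeff (a + 2) k := by
  have hPa := powCoeff_natCast_mul ha k
  have hPa2 := powCoeff_natCast_mul (a := a + 2) (by omega) k
  rw [show a + 2 + k = (a + k) + 2 by ring, Nat.doubleFactorial_add_two,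
    show a + 2 + 3 * k - 2 = (a + 3 * k - 1) + 1 by omega, Nat.doubleFactorial_add_one,
    show a + 3 * k - 1 + 1 = a + 3 * k by omega, show a + 3 * k - 1 - 1 = a + 3 * k - 2 by omega]
    at hPa2
  push_cast at hPa hPa2
  have hE : (0 : ℝ) < (a + k)‼ := by exact_mod_cast Nat.doubleFactorial_pos _
  have ha' : (1 : ℝ) ≤ a := by exact_mod_cast ha
  rw [← eq_div_iff (by positivity)] at hPa hPa2
  rw [hPa, hPa2, Nat.doubleFactorial_add_two]
  push_cast
  field_simp
  ring

lemma tsum_rho_pow_mul_doubleFactorial_div {a : ℕ} (ha : 1 ≤ a) :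
    ∑' k : ℕ, rho ^ k * (((a + 3 * k - 2)‼ : ℝ) / (2 ^ k * k ! * (a + k + 2)‼)) =
      3 * √3 ^ a / (a * (a + 2) * (a + 3)) := by
  have ha' : (0 : ℝ) < a := by exact_mod_cast ha
  have hsum (x c : ℝ) (hx : 0 < x) : Summable fun k => c * (powCoeff x k * rho ^ k) :=
    (summable_powCoeff_mul_rho_pow hx).mul_left c
  have hPa2 := powAtRho_natCast (m := a + 2) (by omega)
  push_cast at hPa2
  simp_rw [doubleFactorial_div_eq_powCoeff_sub ha]
  calc ∑' k : ℕ, rho ^ k * (3 / (2 * a * (a + 3)) * powCoeff a k -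
        1 / (2 * (a + 2) * (a + 3)) * powCoeff (a + 2) k)
      = 3 / (2 * a * (a + 3)) * powAtRho a - 1 / (2 * (a + 2) * (a + 3)) * powAtRho (a + 2) := by
        rw [powAtRho, powAtRho, ← tsum_mul_left, ← tsum_mul_left,
          ← (hsum _ _ ha').tsum_sub (hsum _ _ (by positivity))]
        exact tsum_congr fun k => by ring
    _ = 3 * √3 ^ a / (a * (a + 2) * (a + 3)) := by
        rw [powAtRho_natCast ha, hPa2, pow_add, Real.sq_sqrt (by norm_num)]
        field_simp
        ring

lemma summand_eq (n k : ℕ) :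
    ((12 * √3)⁻¹) ^ k * ((4 : ℝ) ^ ((k : ℤ) - 1) *
        ((2 * (n + 2) + 3 * k - 5)‼ : ℝ) / (k ! * (2 * (n + 2) + k - 1)‼) *
        ((n + 2 : ℕ) * ((2 * (n + 2)).choose (n + 2) : ℝ))) =
      ((n + 2 : ℕ) * ((2 * (n + 2)).choose (n + 2) : ℝ) / 4) *
        (rho ^ k *
          (((2 * n + 1 + 3 * k - 2)‼ : ℝ) / (2 ^ k * k ! * (2 * n + 1 + k + 2)‼))) := by
  rw [show 2 * (n + 2) + 3 * k - 5 = 2 * n + 1 + 3 * k - 2 by omega,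
    show 2 * (n + 2) + k - 1 = 2 * n + 1 + k + 2 by omega,
    show (12 * √3)⁻¹ = rho / 8 by rw [rho]; field_simp; norm_num,
    zpow_sub₀ (by norm_num), zpow_natCast, zpow_one, div_pow,
    show (8 : ℝ) ^ k = 2 ^ k * 4 ^ k by rw [← mul_pow]; norm_num]
  field_simp

lemma choose_mul_sqrt_three_pow_div_eq (n : ℕ) :
    (n + 2 : ℕ) * ((2 * (n + 2)).choose (n + 2) : ℝ) / 4 * (3 * √3 ^ (2 * n + 1) /
        ((2 * n + 1 : ℕ) * ((2 * n + 1 : ℕ) + 2) * ((2 * n + 1 : ℕ) + 3))) =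
      6 ^ (n + 2) * ((2 * (n + 2) - 5)‼ : ℝ) / (8 * √3 * (n + 2)!) := by
  have hdf : ((2 * (n + 1) + 1)‼ : ℝ) = (2 * n + 3) * (2 * n + 1) * (2 * (n + 2) - 5)‼ := by
    rw [show 2 * (n + 1) + 1 = 2 * n + 1 + 2 by ring, Nat.doubleFactorial_add_two,
      Nat.doubleFactorial_add_one, show 2 * (n + 2) - 5 = 2 * n - 1 by omega]
    push_cast
    ring
  have hbinom := congrArg (Nat.cast (R := ℝ))
    (Nat.choose_mul_factorial_eq_doubleFactorial (n + 1))
  rw [show n + 1 + 1 = n + 2 by ring] at hbinom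
  push_cast [hdf] at hbinom
  have hsqrt : √3 ^ (2 * n + 1) * √3 = 3 ^ (n + 1) := by
    rw [← pow_succ, show 2 * n + 1 + 1 = 2 * (n + 1) by ring, pow_mul, Real.sq_sqrt (by norm_num)]
  rw [eq_div_iff (by positivity)]
  push_cast
  calc _ = 6 * (n + 2) / ((2 * n + 1) * (2 * n + 3) * (2 * n + 4)) * (√3 ^ (2 * n + 1) * √3) *
          (((2 * (n + 2)).choose (n + 2) : ℝ) * (n + 2)!) := by ring
    _ = 6 ^ (n + 2) * (2 * (n + 2) - 5)‼ := by
        rw [hsqrt, hbinom, show (6 : ℝ) ^ (n + 2) = 2 ^ (n + 2) * 3 ^ (n + 2) by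
          rw [← mul_pow]; norm_num]
        field_simp
        ring

end Triangulation

open Triangulation in
/-- For integers `L ≥ 2`, the generating series
`Z(L) := ∑_{k≥0} (12√3)^{-k} · #T¹(L,k)`, where
`#T¹(L,k) = 4^{k-1} (2L+3k-5)!!/(k!(2L+k-1)!!) · L·C(2L,L)`,
equals `6^L (2L-5)!!/(8√3 · L!)` (with the convention `(-1)!! = 1`,
realized here by truncated subtraction on `ℕ`). -/
theorem statement0 (L : ℕ) (hL : 2 ≤ L) :
    ∑' k : ℕ,
      ((12 * Real.sqrt 3)⁻¹) ^ k *
        ((4 : ℝ) ^ ((k : ℤ) - 1) *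
            (Nat.doubleFactorial (2 * L + 3 * k - 5) : ℝ) /
            ((Nat.factorial k : ℝ) * (Nat.doubleFactorial (2 * L + k - 1) : ℝ)) *
          ((L : ℝ) * (Nat.choose (2 * L) L : ℝ)))
      = 6 ^ L * (Nat.doubleFactorial (2 * L - 5) : ℝ) /
          (8 * Real.sqrt 3 * (Nat.factorial L : ℝ)) := by
  obtain ⟨n, rfl⟩ := Nat.exists_eq_add_of_le' hL
  rw [tsum_congr (summand_eq n), tsum_mul_left, tsum_rho_pow_mul_doubleFactorial_div (by omega)]
  exact choose_mul_sqrt_three_pow_div_eq n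
end

section
/- Let q_∞(p,·) denote the peeling transition probabilities of the type I UIPT: q_∞(p,p+1) = (1/(12√3))·C¹(p+1)/C¹(p) and q_∞(p,p-m) = 2Z(m+1)·C¹(p-m)/C¹(p) for 0 ≤ m ≤ p-1, and let q_L(p,·) be the transition probabilities of the peeling process for Boltzmann triangulations with first boundary of length L: q_L(p,p+1) = (1/(12√3))·Z'(L,p+1)/Z'(L,p) and q_L(p,p-m) = 2·Z'(L,p-m)/Z'(L,p)·Z(m+1). Then q_L(p,p+j) = ((L+p)/(L+p+j))·q_∞(p,p+j) for every j ∈ {1,0,-1,...,-p+1}; i.e., the finite-boundary peeling process is an h-transform of the UIPT peeling process for h_L(j) = L/(L+j). -/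
lemma statement18_key (L p q : ℕ) (hL : 1 ≤ L) (hp : 1 ≤ p) (hq : 1 ≤ q) :
    ((1 / 2) * (3 : ℝ) ^ (L + q) / ((L : ℝ) + q) *
        ((L : ℝ) * (Nat.choose (2 * L) L : ℝ)) *
        ((q : ℝ) * (Nat.choose (2 * q) q : ℝ))) /
    ((1 / 2) * (3 : ℝ) ^ (L + p) / ((L : ℝ) + p) *
        ((L : ℝ) * (Nat.choose (2 * L) L : ℝ)) *
        ((p : ℝ) * (Nat.choose (2 * p) p : ℝ)))
    = (((L : ℝ) + p) / ((L : ℝ) + q)) *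
      (((3 : ℝ) ^ ((q : ℤ) - 2) / (4 * Real.sqrt (2 * Real.pi)) *
          ((q : ℝ) * (Nat.choose (2 * q) q : ℝ))) /
       ((3 : ℝ) ^ ((p : ℤ) - 2) / (4 * Real.sqrt (2 * Real.pi)) *
          ((p : ℝ) * (Nat.choose (2 * p) p : ℝ)))) := by
  have h3 : (3 : ℝ) ≠ 0 := by norm_num
  have hz : ∀ n : ℕ, (3 : ℝ) ^ ((n : ℤ) - 2) = 3 ^ n / 9 := by
    intro n
    rw [zpow_sub₀ h3, zpow_natCast]
    norm_num
  rw [hz, hz]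
  have hpi : (0:ℝ) < Real.pi := Real.pi_pos
  have hsq : Real.sqrt (2 * Real.pi) ≠ 0 := by positivity
  have hL0 : (0:ℝ) < (L : ℝ) := by exact_mod_cast hL
  have hp0 : (0:ℝ) < (p : ℝ) := by exact_mod_cast hp
  have hq0 : (0:ℝ) < (q : ℝ) := by exact_mod_cast hq
  have hcL : (0:ℝ) < ((Nat.choose (2 * L) L : ℕ) : ℝ) := by
    exact_mod_cast Nat.choose_pos (by omega)
  have hcp : (0:ℝ) < ((Nat.choose (2 * p) p : ℕ) : ℝ) := by
    exact_mod_cast Nat.choose_pos (by omega)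
  have hcq : (0:ℝ) < ((Nat.choose (2 * q) q : ℕ) : ℝ) := by
    exact_mod_cast Nat.choose_pos (by omega)
  have h3p : (0:ℝ) < (3:ℝ) ^ (L + p) := by positivity
  have h3q : (0:ℝ) < (3:ℝ) ^ q := by positivity
  field_simp
  ring_nf

/-- Let `q_∞(p,·)` be the peeling transition probabilities of the
type I UIPT, `q_∞(p,p+1) = (1/(12√3))·C¹(p+1)/C¹(p)` and
`q_∞(p,p-m) = 2·Z(m+1)·C¹(p-m)/C¹(p)` for `0 ≤ m ≤ p-1`, and let `q_L(p,·)` be the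
transition probabilities of the peeling process for Boltzmann triangulations with first
boundary of length `L`, `q_L(p,p+1) = (1/(12√3))·Z'(L,p+1)/Z'(L,p)` and
`q_L(p,p-m) = 2·(Z'(L,p-m)/Z'(L,p))·Z(m+1)`, where
`C¹(n) = 3^{n-2}/(4√(2π))·n·binom(2n,n)`, `Z(m) = 6^m(2m-5)!!/(8√3·m!)` and
`Z'(l,q) = (1/2)·3^{l+q}/(l+q)·l·binom(2l,l)·q·binom(2q,q)`.  Then
`q_L(p,p+j) = ((L+p)/(L+p+j))·q_∞(p,p+j)` for every `j ∈ {1,0,-1,…,-p+1}`: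
the finite-boundary peeling process is an `h`-transform of the UIPT peeling process
for `h_L(j) = L/(L+j)`. -/
theorem statement18 (L p : ℕ) (hL : 1 ≤ L) (hp : 1 ≤ p) :
    let C : ℕ → ℝ := fun n =>
      (3 : ℝ) ^ ((n : ℤ) - 2) / (4 * Real.sqrt (2 * Real.pi)) *
        ((n : ℝ) * (Nat.choose (2 * n) n : ℝ))
    let Z : ℕ → ℝ := fun m =>
      6 ^ m * (Nat.doubleFactorial (2 * m - 5) : ℝ) /
        (8 * Real.sqrt 3 * (Nat.factorial m : ℝ))
    let Z' : ℕ → ℕ → ℝ := fun l q =>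
      (1 / 2) * (3 : ℝ) ^ (l + q) / ((l : ℝ) + q) *
        ((l : ℝ) * (Nat.choose (2 * l) l : ℝ)) *
        ((q : ℝ) * (Nat.choose (2 * q) q : ℝ))
    ((1 / (12 * Real.sqrt 3)) * (Z' L (p + 1) / Z' L p)
        = (((L : ℝ) + p) / ((L : ℝ) + p + 1)) *
            ((1 / (12 * Real.sqrt 3)) * (C (p + 1) / C p)))
    ∧ ∀ m : ℕ, m ≤ p - 1 →
        2 * (Z' L (p - m) / Z' L p) * Z (m + 1)
          = (((L : ℝ) + p) / ((L : ℝ) + p - m)) *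
              (2 * Z (m + 1) * (C (p - m) / C p)) := by
  intro C Z Z'
  constructor
  · have h := statement18_key L p (p + 1) hL hp (by omega)
    simp only [C, Z']
    push_cast at h ⊢
    rw [h]
    ring
  · intro m hm
    have hmp : m < p := by omega
    have h := statement18_key L p (p - m) hL hp (by omega)
    simp only [C, Z, Z']
    rw [Nat.cast_sub hmp.le] at h ⊢
    rw [h]
    have hne : ((L : ℝ) + ((p : ℝ) - (m : ℝ))) = (L : ℝ) + (p : ℝ) - (m : ℝ) := by ring
    rw [hne]
    ring
end

section
/- As L and j tend to infinity, the killing probability q_L(j,†) := 1 - q_L(j,j+1) - ∑_{m=0}^{j-1} q_L(j,j-m) = L·Z(L+j+1)/Z'(L,j) of the peeling process satisfies q_L(j,†) ~ (√(3π)/4)·√(L/j)·(L+j)^{-3/2}, using Z(L+j+1) ~ (√3/(8√π))·12^{L+j}(L+j)^{-5/2} and Z'(L,j) ~ (3^{L+j}·4^L/(2(L+j)))·√(L/π)·j·binom(2j,j). -/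
/-!
Stirling's formula gives `centralBinom n ~ 4 ^ n / √(π n)`. Through
`(2n - 3)‼ = (2n)! / (2 ^ n n! (2n - 1))`, both `Z (n + 1)` and `Z' L j` are elementary factors times
central binomial coefficients, whence `Z (n + 1) ~ (√3 / (8√π)) 12 ^ n n ^ (-5/2)` and
`Z' L j ~ 12 ^ (L + j) √(L j) / (2π (L + j))`. The quotient of these two equivalents, multiplied by
`L`, is exactly `(√(3π) / 4) √(L / j) (L + j) ^ (-3/2)`.
-/

open Filter Real Asymptotics Nat

lemma centralBinom_isEquivalent :
    (fun n : ℕ ↦ (centralBinom n : ℝ)) ~[atTop] fun n ↦ 4 ^ n / √(π * n) := by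
  have h2n : Tendsto (fun n : ℕ ↦ 2 * n) atTop atTop :=
    tendsto_id.const_mul_atTop' two_pos
  have hstirling := Stirling.factorial_isEquivalent_stirling
  refine ((hstirling.comp_tendsto h2n).div (hstirling.pow 2)).congr_left ?_ |>.congr_right ?_
  · refine Eventually.of_forall fun n ↦ ?_
    simp only [Function.comp_apply, Pi.div_apply, Pi.pow_apply]
    rw [centralBinom_eq_two_mul_choose, Nat.cast_choose ℝ (by omega), two_mul, Nat.add_sub_cancel,
      ← two_mul, sq]
  · filter_upwards [eventually_gt_atTop 0] with n hn
    simp only [Function.comp_apply, Pi.div_apply, Pi.pow_apply]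
    have h4 : √(2 * ((2 * n : ℕ) : ℝ) * π) = 2 * √(π * n) := by
      rw [show 2 * ((2 * n : ℕ) : ℝ) * π = 2 ^ 2 * (π * n) by push_cast; ring,
        sqrt_mul (by norm_num), sqrt_sq (by norm_num)]
    have h2 : √(2 * n * π) ^ 2 = 2 * (π * n) := by rw [sq_sqrt (by positivity)]; ring
    have hsq : √(π * n) ^ 2 = π * n := sq_sqrt (by positivity)
    rw [h4, mul_pow, h2, show ((2 * n : ℕ) : ℝ) / rexp 1 = 2 * (n / rexp 1) by push_cast; ring,
      mul_pow, pow_mul]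
    have : (0 : ℝ) < n := by exact_mod_cast hn
    field_simp
    rw [hsq]; ring

lemma const_mul_natCast_add_isEquivalent {a : ℝ} (ha : 0 < a) (c : ℝ) :
    (fun n : ℕ ↦ a * n + c) ~[atTop] fun n ↦ a * n :=
  IsEquivalent.refl.add_const_of_norm_tendsto_atTop
    (tendsto_norm_atTop_atTop.comp (tendsto_natCast_atTop_atTop.const_mul_atTop ha))

lemma rpow_neg_five_div_two {x : ℝ} (hx : 0 ≤ x) : x ^ (-(5 : ℝ) / 2) = (x ^ 2 * √x)⁻¹ := by
  rw [neg_div, rpow_neg hx, show (5 : ℝ) / 2 = 2 + 1 / 2 by norm_num, rpow_add' hx (by norm_num),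
    rpow_two, sqrt_eq_rpow]

noncomputable def Z (m : ℕ) : ℝ := 6 ^ m * ((2 * m - 5)‼ : ℝ) / (8 * √3 * (m ! : ℝ))

lemma centralBinom_succ_mul_factorial (k : ℕ) :
    centralBinom (k + 1) * (k + 1)! = 2 ^ (k + 1) * (2 * k + 1) * (2 * k - 1)‼ := by
  have hchoose : centralBinom (k + 1) * (k + 1)! * (k + 1)! = (2 * k + 2)! := by
    have := Nat.choose_mul_factorial_mul_factorial (show k + 1 ≤ 2 * (k + 1) by omega)
    rwa [show 2 * (k + 1) - (k + 1) = k + 1 by omega, ← centralBinom_eq_two_mul_choose] at this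
  have hfact : (2 * k + 2)! = 2 ^ (k + 1) * (k + 1)! * ((2 * k + 1) * (2 * k - 1)‼) := by
    rw [factorial_eq_mul_doubleFactorial, show 2 * k + 1 + 1 = 2 * (k + 1) by omega,
      doubleFactorial_two_mul, doubleFactorial_add_one]
  refine Nat.eq_of_mul_eq_mul_right (k + 1).factorial_pos ?_
  rw [hchoose, hfact]; ring

lemma Z_succ {n : ℕ} (hn : 1 ≤ n) :
    Z (n + 1) = 3 ^ (n + 1) * centralBinom n / (4 * √3 * (2 * n - 1) * (n + 1)) := by
  obtain ⟨k, rfl⟩ : ∃ k, n = k + 1 := ⟨n - 1, by omega⟩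
  have h := congrArg (Nat.cast : ℕ → ℝ) (centralBinom_succ_mul_factorial k)
  rw [Z, show 2 * (k + 1 + 1) - 5 = 2 * k - 1 by omega, factorial_succ (k + 1)]
  push_cast at h ⊢
  have : (0 : ℝ) < (k + 1)! := by exact_mod_cast (k + 1).factorial_pos
  rw [show 2 * ((k : ℝ) + 1) - 1 = 2 * k + 1 by ring, show (6 : ℝ) = 2 * 3 by norm_num, mul_pow]
  field_simp
  linear_combination -8 * h

lemma Z_succ_isEquivalent :
    (fun n : ℕ ↦ Z (n + 1)) ~[atTop] fun n ↦ √3 / (8 * √π) * 12 ^ n * (n : ℝ) ^ (-(5 : ℝ) / 2) := by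
  have hden : (fun n : ℕ ↦ 4 * √3 * (2 * n - 1) * (n + 1)) ~[atTop]
      fun n ↦ 4 * √3 * (2 * n) * n := by
    have h1 := const_mul_natCast_add_isEquivalent two_pos (-1)
    have h2 := const_mul_natCast_add_isEquivalent one_pos 1
    simp only [← sub_eq_add_neg, one_mul] at h1 h2
    exact (IsEquivalent.refl.mul h1).mul h2
  refine (((IsEquivalent.refl (u := fun n : ℕ ↦ (3 : ℝ) ^ (n + 1))).mul
    centralBinom_isEquivalent).div hden).congr_left ?_ |>.congr_right ?_
  · filter_upwards [eventually_ge_atTop 1] with n hn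
    exact (Z_succ hn).symm
  · filter_upwards [eventually_gt_atTop 0] with n hn
    have : (0 : ℝ) < n := by exact_mod_cast hn
    simp only [Pi.mul_apply, Pi.div_apply]
    rw [rpow_neg_five_div_two this.le, sqrt_mul pi_pos.le, show (12 : ℝ) = 3 * 4 by norm_num,
      mul_pow, pow_succ]
    have : √3 ^ 2 = 3 := sq_sqrt (by norm_num)
    field_simp
    rw [this]; ring

noncomputable def Z' (L p : ℕ) : ℝ :=
  (1 / 2) * (3 : ℝ) ^ (L + p) / ((L : ℝ) + p) * ((L : ℝ) * ((2 * L).choose L : ℝ)) *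
    ((p : ℝ) * ((2 * p).choose p : ℝ))

lemma natCast_mul_centralBinom_isEquivalent :
    (fun n : ℕ ↦ n * (centralBinom n : ℝ)) ~[atTop] fun n ↦ 4 ^ n * √(n / π) := by
  refine ((IsEquivalent.refl (u := fun n : ℕ ↦ (n : ℝ))).mul
    centralBinom_isEquivalent).congr_right ?_
  filter_upwards [eventually_gt_atTop 0] with n hn
  have : (0 : ℝ) < n := by exact_mod_cast hn
  simp only [Pi.mul_apply]
  rw [sqrt_div' _ pi_pos.le, sqrt_mul pi_pos.le]
  have : √(n : ℝ) ^ 2 = n := sq_sqrt this.le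
  field_simp
  rw [this]

lemma Z'_isEquivalent :
    (fun p : ℕ × ℕ ↦ Z' p.1 p.2) ~[atTop ×ˢ atTop]
      fun p ↦ 12 ^ (p.1 + p.2) * √(p.1 * p.2) / (2 * π * (p.1 + p.2)) := by
  have h := natCast_mul_centralBinom_isEquivalent
  refine ((IsEquivalent.refl (u := fun p : ℕ × ℕ ↦ 1 / 2 * (3 : ℝ) ^ (p.1 + p.2) / (p.1 + p.2))).mul
    (h.comp_tendsto tendsto_fst) |>.mul (h.comp_tendsto tendsto_snd)).congr_right ?_
  refine Eventually.of_forall fun p ↦ ?_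
  simp only [Pi.mul_apply, Function.comp_apply]
  rw [sqrt_div' _ pi_pos.le, sqrt_div' _ pi_pos.le, sqrt_mul (Nat.cast_nonneg _),
    show (12 : ℝ) = 3 * 4 by norm_num, mul_pow, pow_add 4]
  have : √π ^ 2 = π := sq_sqrt pi_pos.le
  field_simp
  rw [this]; ring

noncomputable def killingProb (L j : ℕ) : ℝ := L * Z (L + j + 1) / Z' L j

lemma killingProb_isEquivalent :
    (fun p : ℕ × ℕ ↦ killingProb p.1 p.2) ~[atTop ×ˢ atTop]
      fun p ↦ √(3 * π) / 4 * √(p.1 / p.2) * ((p.1 : ℝ) + p.2) ^ (-(3 : ℝ) / 2) := by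
  have hN : Tendsto (fun p : ℕ × ℕ ↦ p.1 + p.2) (atTop ×ˢ atTop) atTop :=
    tendsto_atTop_mono (fun p ↦ Nat.le_add_right _ _) tendsto_fst
  refine ((IsEquivalent.refl (u := fun p : ℕ × ℕ ↦ (p.1 : ℝ))).mul
    (Z_succ_isEquivalent.comp_tendsto hN) |>.div Z'_isEquivalent).congr_right ?_
  filter_upwards [(eventually_gt_atTop 0).prod_mk (eventually_gt_atTop 0)] with p ⟨hL, hj⟩
  have hL' : (0 : ℝ) < p.1 := by exact_mod_cast hL
  have hj' : (0 : ℝ) < p.2 := by exact_mod_cast hj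
  have hrpow : ((p.1 : ℝ) + p.2) ^ (-(5 : ℝ) / 2) =
      ((p.1 : ℝ) + p.2) ^ (-(3 : ℝ) / 2) / (p.1 + p.2) := by
    rw [eq_div_iff (by positivity), ← rpow_add_one (by positivity)]; norm_num
  simp only [Pi.mul_apply, Pi.div_apply, Function.comp_apply]
  push_cast
  rw [hrpow, sqrt_mul (show (0 : ℝ) ≤ 3 by norm_num), sqrt_div' _ hj'.le, sqrt_mul hL'.le]
  have h1 : √(p.1 : ℝ) ^ 2 = p.1 := sq_sqrt hL'.le
  have h2 : √π ^ 2 = π := sq_sqrt pi_pos.le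
  field_simp
  rw [h1, h2]; ring

/-- As `L` and `j` tend to infinity, the killing probability
`q_L(j,†) = L·Z(L+j+1)/Z'(L,j)` of the peeling process (the probability that the
revealed triangle touches the first boundary), with
`Z(m) = 6^m(2m-5)!!/(8√3·m!)` and
`Z'(L,j) = (1/2)·3^{L+j}/(L+j)·L·binom(2L,L)·j·binom(2j,j)`, satisfies
`q_L(j,†) ~ (√(3π)/4)·√(L/j)·(L+j)^{-3/2}`; i.e. the ratio tends to `1` along the
product filter `atTop ×ˢ atTop`. -/
theorem statement19 :
    Filter.Tendsto
      (fun Lj : ℕ × ℕ =>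
        ((Lj.1 : ℝ) *
            (6 ^ (Lj.1 + Lj.2 + 1) *
                (Nat.doubleFactorial (2 * (Lj.1 + Lj.2 + 1) - 5) : ℝ) /
              (8 * Real.sqrt 3 * (Nat.factorial (Lj.1 + Lj.2 + 1) : ℝ))) /
            ((1 / 2) * (3 : ℝ) ^ (Lj.1 + Lj.2) / ((Lj.1 : ℝ) + Lj.2) *
              ((Lj.1 : ℝ) * (Nat.choose (2 * Lj.1) Lj.1 : ℝ)) *
              ((Lj.2 : ℝ) * (Nat.choose (2 * Lj.2) Lj.2 : ℝ)))) /
          ((Real.sqrt (3 * Real.pi) / 4) * Real.sqrt ((Lj.1 : ℝ) / (Lj.2 : ℝ)) *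
            ((Lj.1 : ℝ) + (Lj.2 : ℝ)) ^ (-(3 : ℝ) / 2)))
      (Filter.atTop ×ˢ Filter.atTop) (nhds 1) := by
  refine (isEquivalent_iff_tendsto_one ?_).mp killingProb_isEquivalent
  filter_upwards [(eventually_gt_atTop 0).prod_mk (eventually_gt_atTop 0)] with p ⟨hL, hj⟩
  have : (0 : ℝ) < p.1 := by exact_mod_cast hL
  have : (0 : ℝ) < p.2 := by exact_mod_cast hj
  positivity
end
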